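/- arXiv:2605.26235 — 4 statements merged into one kernel-verified Lean document; each statement's English description precedes it below -/
import Mathlib

section
/- Let G be a simple graph, u a vertex, γ ∈ (0,1], and let C ⊆ N(u) be a set of vertices such that every v ∈ C satisfies |N(u) ∩ N(v)| ≥ γ·|N(u)| (containment score at least γ), where N(·) includes the vertex itself and its neighbors. Suppose C ∪ {u} has size c+1. Then every v ∈ C is non-adjacent to at most (1−γ)·|N(u)| vertices of C ∪ {u}, and hence the number of edges of the induced subgraph on S = C ∪ {u} is at least C(c+1,2) − (c/2)·(1−γ)·|N(u)|... In particular, if c ≥ b·|N(u)| for some b ∈ (0,1], then the edge density satisfies δ(S) ≥ 1 − (1−γ)/b. -/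
lemma prod_filter_card {V : Type*} [DecidableEq V] (S : Finset V) (P : V → V → Prop)
    [∀ a b, Decidable (P a b)] :
    ((S ×ˢ S).filter fun p => P p.1 p.2).card = ∑ v ∈ S, (S.filter fun w => P v w).card := by
  rw [Finset.card_filter, Finset.sum_product]
  refine Finset.sum_congr rfl fun v hv => ?_
  rw [Finset.card_filter]

/-- Density guarantee of the similarity-based detection routine: if every `v` in
`C ⊆ N(u)` (closed neighborhoods) has containment score at least `γ`, then every
`v ∈ C` is non-adjacent to at most `(1-γ)|N(u)|` vertices of `S = C ∪ {u}`, hence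
`|E(S)| ≥ C(c+1,2) - (c/2)(1-γ)|N(u)|`, and if moreover `c ≥ b·|N(u)|` with
`b ∈ (0,1]` then `δ(S) ≥ 1 - (1-γ)/b`. Here `m = |E(S)|` via the ordered-pair count. -/
theorem stmt10 {V : Type*} [Fintype V] [DecidableEq V] (G : SimpleGraph V)
    [DecidableRel G.Adj] (u : V) (γ : ℝ) (hγ0 : 0 < γ) (hγ1 : γ ≤ 1)
    (N : V → Finset V) (hN : ∀ x, N x = insert x (G.neighborFinset x))
    (C : Finset V) (hCsub : C ⊆ N u) (huC : u ∉ C)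
    (hscore : ∀ v ∈ C, γ * ((N u).card : ℝ) ≤ ((N u ∩ N v).card : ℝ))
    (c : ℕ) (hc : C.card = c)
    (S : Finset V) (hS : S = insert u C)
    (m : ℕ) (hm : 2 * m = ((S ×ˢ S).filter fun p => G.Adj p.1 p.2).card) :
    (∀ v ∈ C, ((S.filter fun w => w ≠ v ∧ ¬ G.Adj v w).card : ℝ)
        ≤ (1 - γ) * ((N u).card : ℝ)) ∧
    (((c : ℝ) + 1) * (c : ℝ) / 2 - (c : ℝ) / 2 * (1 - γ) * ((N u).card : ℝ) ≤ (m : ℝ)) ∧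
    (∀ b : ℝ, 0 < b → b ≤ 1 → b * ((N u).card : ℝ) ≤ (c : ℝ) →
      1 - (1 - γ) / b ≤ (m : ℝ) / (((c : ℝ) + 1) * (c : ℝ) / 2)) := by
  classical
  have huN : u ∈ N u := by rw [hN]; exact Finset.mem_insert_self _ _
  have hSsub : S ⊆ N u := by
    rw [hS]; intro w hw
    rcases Finset.mem_insert.1 hw with h | h
    · exact h ▸ huN
    · exact hCsub h
  have hScard : S.card = c + 1 := by
    rw [hS, Finset.card_insert_of_notMem huC, hc]
  have hadjC : ∀ w ∈ C, G.Adj u w := by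
    intro w hw
    have hwN := hCsub hw
    rw [hN] at hwN
    rcases Finset.mem_insert.1 hwN with h | h
    · exact absurd (h ▸ hw) huC
    · exact (SimpleGraph.mem_neighborFinset _ _ _).1 h
  -- Part 1
  have part1 : ∀ v ∈ C, ((S.filter fun w => w ≠ v ∧ ¬ G.Adj v w).card : ℝ)
      ≤ (1 - γ) * ((N u).card : ℝ) := by
    intro v hv
    have hsub : (S.filter fun w => w ≠ v ∧ ¬ G.Adj v w) ⊆ N u \ N v := by
      intro w hw
      simp only [Finset.mem_filter] at hw
      refine Finset.mem_sdiff.2 ⟨hSsub hw.1, fun hwv => ?_⟩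
      rw [hN] at hwv
      rcases Finset.mem_insert.1 hwv with h | h
      · exact hw.2.1 h
      · exact hw.2.2 ((SimpleGraph.mem_neighborFinset _ _ _).1 h)
    have hcard := Finset.card_le_card hsub
    have hsd : ((N u) ∩ (N v)).card + ((N u) \ (N v)).card = (N u).card :=
      Finset.card_inter_add_card_sdiff _ _
    have h1 : (((S.filter fun w => w ≠ v ∧ ¬ G.Adj v w).card : ℝ)) ≤ ((N u \ N v).card : ℝ) := by
      exact_mod_cast hcard
    have h2 : ((N u ∩ N v).card : ℝ) + ((N u \ N v).card : ℝ) = ((N u).card : ℝ) := by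
      exact_mod_cast hsd
    have h3 := hscore v hv
    nlinarith
  refine ⟨part1, ?_⟩
  -- counting identity
  have key : (c + 1) * (c + 1)
      = 2 * m + (c + 1) + ∑ v ∈ S, (S.filter fun w => w ≠ v ∧ ¬ G.Adj v w).card := by
    have hmsum : 2 * m = ∑ v ∈ S, (S.filter fun w => G.Adj v w).card := by
      rw [hm, prod_filter_card]
    have hsplit : ∀ v ∈ S, S.card
        = (S.filter fun w => G.Adj v w).card + (1 + (S.filter fun w => w ≠ v ∧ ¬ G.Adj v w).card) := by
      intro v hv
      have h0 := Finset.card_filter_add_card_filter_not (s := S) (fun w => G.Adj v w)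
      have h1 := Finset.card_filter_add_card_filter_not
        (s := S.filter fun w => ¬ G.Adj v w) (fun w => w = v)
      rw [Finset.filter_filter, Finset.filter_filter] at h1
      have e1 : (S.filter fun w => ¬ G.Adj v w ∧ w = v) = S.filter fun w => w = v := by
        apply Finset.filter_congr
        intro w hw
        constructor
        · exact fun h => h.2
        · exact fun h => ⟨by simp [h], h⟩
      have e2 : (S.filter fun w => ¬ G.Adj v w ∧ ¬ w = v) = S.filter fun w => w ≠ v ∧ ¬ G.Adj v w := by
        apply Finset.filter_congr
        intro w hw
        exact ⟨fun h => ⟨h.2, h.1⟩, fun h => ⟨h.2, h.1⟩⟩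
      have e3 : (S.filter fun w => w = v).card = 1 := by
        rw [Finset.filter_eq' S v, if_pos hv, Finset.card_singleton]
      rw [e1, e2, e3] at h1
      omega
    have hsum : ∑ v ∈ S, S.card
        = ∑ v ∈ S, ((S.filter fun w => G.Adj v w).card + (1 + (S.filter fun w => w ≠ v ∧ ¬ G.Adj v w).card)) :=
      Finset.sum_congr rfl hsplit
    rw [Finset.sum_add_distrib, Finset.sum_add_distrib, Finset.sum_const, Finset.sum_const] at hsum
    rw [hScard] at hsum
    simp only [smul_eq_mul, mul_one] at hsum
    omega
  -- the term at u vanishes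
  have hsumS : ∑ v ∈ S, (S.filter fun w => w ≠ v ∧ ¬ G.Adj v w).card
      = ∑ v ∈ C, (S.filter fun w => w ≠ v ∧ ¬ G.Adj v w).card := by
    have hempty : (S.filter fun w => w ≠ u ∧ ¬ G.Adj u w) = ∅ := by
      rw [Finset.filter_eq_empty_iff]
      intro w hw
      rw [hS] at hw
      rcases Finset.mem_insert.1 hw with h | h
      · simp [h]
      · simp [hadjC w h]
    rw [hS, Finset.sum_insert huC]
    rw [hS] at hempty
    rw [hempty]
    simp
  rw [hsumS] at key
  have hsumC : (∑ v ∈ C, ((S.filter fun w => w ≠ v ∧ ¬ G.Adj v w).card : ℝ))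
      ≤ (c : ℝ) * ((1 - γ) * ((N u).card : ℝ)) := by
    calc (∑ v ∈ C, ((S.filter fun w => w ≠ v ∧ ¬ G.Adj v w).card : ℝ))
        ≤ ∑ v ∈ C, (1 - γ) * ((N u).card : ℝ) := Finset.sum_le_sum part1
      _ = (c : ℝ) * ((1 - γ) * ((N u).card : ℝ)) := by
          rw [Finset.sum_const, hc, nsmul_eq_mul]
  have keyR : ((c : ℝ) + 1) * ((c : ℝ) + 1)
      = 2 * (m : ℝ) + ((c : ℝ) + 1) + ∑ v ∈ C, ((S.filter fun w => w ≠ v ∧ ¬ G.Adj v w).card : ℝ) := by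
    have := key
    push_cast [Nat.cast_sum] at this ⊢
    exact_mod_cast this
  have part2 : ((c : ℝ) + 1) * (c : ℝ) / 2 - (c : ℝ) / 2 * (1 - γ) * ((N u).card : ℝ) ≤ (m : ℝ) := by
    nlinarith
  refine ⟨part2, ?_⟩
  intro b hb0 hb1 hbc
  have hNu1 : (1 : ℝ) ≤ ((N u).card : ℝ) := by
    have : 0 < (N u).card := Finset.card_pos.2 ⟨u, huN⟩
    exact_mod_cast this
  have hc1 : (1 : ℝ) ≤ (c : ℝ) := by
    by_contra h
    push_neg at h
    have : (c : ℝ) = 0 := by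
      have : c = 0 := by exact_mod_cast (by exact_mod_cast Nat.lt_one_iff.1 (by exact_mod_cast h) : c = 0)
      simp [this]
    nlinarith
  have hD : (0 : ℝ) < ((c : ℝ) + 1) * (c : ℝ) / 2 := by nlinarith
  rw [le_div_iff₀ hD]
  have hγ' : (0 : ℝ) ≤ 1 - γ := by linarith
  have hbNu : ((N u).card : ℝ) ≤ (c : ℝ) / b := by
    rw [le_div_iff₀ hb0]; nlinarith
  have hgoal : (1 - (1 - γ) / b) * (((c : ℝ) + 1) * (c : ℝ) / 2)
      ≤ ((c : ℝ) + 1) * (c : ℝ) / 2 - (c : ℝ) / 2 * (1 - γ) * ((N u).card : ℝ) := by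
    have h1 : (c : ℝ) / 2 * (1 - γ) * ((N u).card : ℝ) ≤ (1 - γ) / b * (((c : ℝ) + 1) * (c : ℝ) / 2) := by
      rw [div_mul_eq_mul_div (1 - γ) b (((c : ℝ) + 1) * (c : ℝ) / 2), le_div_iff₀ hb0]
      have h2 : (1 - γ) * (b * ((N u).card : ℝ)) ≤ (1 - γ) * (c : ℝ) :=
        mul_le_mul_of_nonneg_left hbc hγ'
      nlinarith [mul_le_mul_of_nonneg_left h2 (by positivity : (0:ℝ) ≤ (c:ℝ)/2)]
    nlinarith
  linarith
end

section
/- Let π be a uniformly random permutation of a finite universe U, and let A, B ⊆ U be nonempty finite sets. Then the probability that the minimum of π over A equals the minimum of π over B is exactly the Jaccard similarity |A ∩ B| / |A ∪ B|. -/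
open Finset

/-- For a uniformly random permutation `σ` of a finite universe `U` (a random
bijection `U ≃ Fin |U|`) and nonempty `A, B ⊆ U`, the probability that
`min σ(A) = min σ(B)` equals the Jaccard similarity `|A ∩ B| / |A ∪ B|`. -/
theorem stmt11 {U : Type*} [Fintype U] [DecidableEq U] [Nonempty U]
    (A B : Finset U) (hA : A.Nonempty) (hB : B.Nonempty) :
    (((Finset.univ.filter fun σ : U ≃ Fin (Fintype.card U) =>
        (A.image fun x => ((σ x : ℕ))).min = (B.image fun x => ((σ x : ℕ))).min).card : ℝ)
      / (Fintype.card (U ≃ Fin (Fintype.card U)) : ℝ))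
    = ((A ∩ B).card : ℝ) / ((A ∪ B).card : ℝ) := by
  classical
  set n := Fintype.card U with hn
  set v : (U ≃ Fin n) → U → ℕ := fun σ x => (σ x : ℕ) with hv
  have hinj : ∀ σ : U ≃ Fin n, Function.Injective (v σ) := by
    intro σ a b h
    exact σ.injective (Fin.val_injective h)
  have hTne : (A ∪ B).Nonempty := hA.mono subset_union_left
  have hTim : ∀ σ : U ≃ Fin n, ((A ∪ B).image (v σ)).Nonempty := fun σ => hTne.image _
  set m : (U ≃ Fin n) → ℕ := fun σ => ((A ∪ B).image (v σ)).min' (hTim σ) with hm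
  have event_iff : ∀ σ : U ≃ Fin n,
      ((A.image (v σ)).min = (B.image (v σ)).min) ↔ ∃ x ∈ A ∩ B, v σ x = m σ := by
    intro σ
    have hAim : (A.image (v σ)).Nonempty := hA.image _
    have hBim : (B.image (v σ)).Nonempty := hB.image _
    rw [← Finset.coe_min' hAim, ← Finset.coe_min' hBim]
    constructor
    · intro h
      have h' : (A.image (v σ)).min' hAim = (B.image (v σ)).min' hBim :=
        WithBot.coe_injective h
      obtain ⟨a, ha, hva⟩ := Finset.mem_image.1 (Finset.min'_mem _ hAim)
      obtain ⟨b, hb, hvb⟩ := Finset.mem_image.1 (Finset.min'_mem _ hBim)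
      have hab : a = b := hinj σ (by rw [hva, hvb, h'])
      subst hab
      refine ⟨a, Finset.mem_inter.2 ⟨ha, hb⟩, le_antisymm ?_ ?_⟩
      · apply Finset.le_min'
        intro y hy
        obtain ⟨z, hz, rfl⟩ := Finset.mem_image.1 hy
        rcases Finset.mem_union.1 hz with hz | hz
        · rw [hva]; exact Finset.min'_le _ _ (Finset.mem_image_of_mem _ hz)
        · rw [hvb]; exact Finset.min'_le _ _ (Finset.mem_image_of_mem _ hz)
      · exact Finset.min'_le _ _ (Finset.mem_image_of_mem _
          (Finset.mem_union_left _ ha))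
    · rintro ⟨x, hx, hvx⟩
      obtain ⟨hxA, hxB⟩ := Finset.mem_inter.1 hx
      have hle : ∀ (S : Finset U) (hS : (S.image (v σ)).Nonempty), x ∈ S → S ⊆ A ∪ B →
          (S.image (v σ)).min' hS = v σ x := by
        intro S hS hxS hSsub
        refine le_antisymm (Finset.min'_le _ _ (Finset.mem_image_of_mem _ hxS)) ?_
        rw [hvx]
        apply Finset.le_min'
        intro y hy
        refine Finset.min'_le _ _ ?_
        exact Finset.image_subset_image hSsub hy
      rw [show (A.image (v σ)).min' hAim = (B.image (v σ)).min' hBim from by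
        rw [hle A hAim hxA subset_union_left, hle B hBim hxB subset_union_right]]
  -- fiber counts
  set c : U → ℕ := fun x => (univ.filter fun σ : U ≃ Fin n => v σ x = m σ).card with hc
  have hswapT : ∀ x ∈ A ∪ B, ∀ y ∈ A ∪ B, (A ∪ B).image (⇑(Equiv.swap x y)) = A ∪ B := by
    intro x hx y hy
    apply Finset.eq_of_subset_of_card_le
    · intro z hz
      obtain ⟨w, hw, rfl⟩ := Finset.mem_image.1 hz
      rcases eq_or_ne w x with rfl | hwx
      · rwa [Equiv.swap_apply_left]
      rcases eq_or_ne w y with rfl | hwy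
      · rwa [Equiv.swap_apply_right]
      · rwa [Equiv.swap_apply_of_ne_of_ne hwx hwy]
    · rw [Finset.card_image_of_injective _ (Equiv.injective _)]
  have hmswap : ∀ x ∈ A ∪ B, ∀ y ∈ A ∪ B, ∀ σ : U ≃ Fin n,
      m ((Equiv.swap x y).trans σ) = m σ := by
    intro x hx y hy σ
    have : (A ∪ B).image (v ((Equiv.swap x y).trans σ))
        = (A ∪ B).image (v σ) := by
      have : (A ∪ B).image (v ((Equiv.swap x y).trans σ))
          = ((A ∪ B).image (⇑(Equiv.swap x y))).image (v σ) := by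
        rw [Finset.image_image]; rfl
      rw [this, hswapT x hx y hy]
    simp only [hm]
    congr 1
  have key : ∀ x ∈ A ∪ B, ∀ y ∈ A ∪ B, c x = c y := by
    intro x hx y hy
    simp only [hc]
    apply Finset.card_bij' (fun σ _ => (Equiv.swap x y).trans σ)
      (fun σ _ => (Equiv.swap x y).trans σ)
    · intro σ hσ
      simp only [Finset.mem_filter, Finset.mem_univ, true_and] at hσ ⊢
      rw [hmswap x hx y hy]
      show v σ (Equiv.swap x y y) = m σ
      rwa [Equiv.swap_apply_right]
    · intro σ hσ
      simp only [Finset.mem_filter, Finset.mem_univ, true_and] at hσ ⊢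
      rw [hmswap x hx y hy]
      show v σ (Equiv.swap x y x) = m σ
      rwa [Equiv.swap_apply_left]
    · intro σ _
      ext u
      simp [Equiv.swap_apply_self]
    · intro σ _
      ext u
      simp [Equiv.swap_apply_self]
  obtain ⟨x₀, hx₀⟩ := hTne
  have hfilter : ∀ S : Finset U, S ⊆ A ∪ B →
      (univ.filter fun σ : U ≃ Fin n => ∃ x ∈ S, v σ x = m σ).card = S.card * c x₀ := by
    intro S hS
    have : (univ.filter fun σ : U ≃ Fin n => ∃ x ∈ S, v σ x = m σ)
        = S.biUnion (fun x => univ.filter fun σ : U ≃ Fin n => v σ x = m σ) := by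
      ext σ
      simp [Finset.mem_biUnion]
    rw [this, Finset.card_biUnion]
    · rw [Finset.sum_congr rfl (fun x hx => key x (hS hx) x₀ hx₀)]
      simp [mul_comm]
    · intro x hx y hy hxy
      rw [Function.onFun, Finset.disjoint_left]
      intro σ hσx hσy
      simp only [Finset.mem_filter] at hσx hσy
      exact hxy (hinj σ (hσx.2.trans hσy.2.symm))
  have htotal : Fintype.card (U ≃ Fin n) = (A ∪ B).card * c x₀ := by
    rw [← hfilter (A ∪ B) subset_rfl, ← Finset.card_univ]
    congr 1
    rw [eq_comm, Finset.filter_true_of_mem]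
    intro σ _
    obtain ⟨x, hx, hvx⟩ := Finset.mem_image.1 (Finset.min'_mem _ (hTim σ))
    exact ⟨x, hx, hvx⟩
  have hcount : (Finset.univ.filter fun σ : U ≃ Fin n =>
        (A.image fun x => ((σ x : ℕ))).min = (B.image fun x => ((σ x : ℕ))).min).card
      = (A ∩ B).card * c x₀ := by
    rw [Finset.filter_congr (fun σ _ => event_iff σ)]
    exact hfilter (A ∩ B) (Finset.inter_subset_left.trans subset_union_left)
  have hpos : 0 < Fintype.card (U ≃ Fin n) := Fintype.card_pos_iff.2 ⟨Fintype.equivFin U⟩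
  have hc0 : (c x₀ : ℝ) ≠ 0 := by
    have : c x₀ ≠ 0 := by
      intro h
      rw [htotal, h, mul_zero] at hpos
      exact lt_irrefl 0 hpos
    exact_mod_cast this
  rw [hcount, htotal]
  push_cast
  rw [mul_div_mul_right _ _ hc0]
end

section
/- For finite sets A, B ⊆ U with hash values given by an injective function h : U → ℝ, and any k ≥ 1 with |A| ≥ k and |B| ≥ k: every element of S_k(A ∪ B) ∩ A belongs to S_k(A), and every element of S_k(A ∪ B) ∩ B belongs to S_k(B). Consequently S_k(A ∪ B) ∩ S_k(A) ∩ S_k(B) = S_k(A ∪ B) ∩ A ∩ B. -/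
/-- For an injective hash `h : U → ℝ` and `|A|, |B| ≥ k`, every element of
`S_k(A ∪ B) ∩ A` lies in `S_k(A)`, every element of `S_k(A ∪ B) ∩ B` lies in
`S_k(B)`, and consequently `S_k(A∪B) ∩ S_k(A) ∩ S_k(B) = S_k(A∪B) ∩ A ∩ B`. -/
theorem stmt14 {U : Type*} [Fintype U] [DecidableEq U]
    (h : U → ℝ) (hinj : Function.Injective h)
    (A B : Finset U) (k : ℕ) (hk : 1 ≤ k) (hA : k ≤ A.card) (hB : k ≤ B.card)
    (Sk : Finset U → Finset U)
    (hSk : ∀ X, Sk X = X.filter fun y => (X.filter fun z => h z < h y).card < k) :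
    (∀ x ∈ Sk (A ∪ B) ∩ A, x ∈ Sk A) ∧
    (∀ x ∈ Sk (A ∪ B) ∩ B, x ∈ Sk B) ∧
    Sk (A ∪ B) ∩ Sk A ∩ Sk B = Sk (A ∪ B) ∩ A ∩ B := by
  have key : ∀ C : Finset U, C ⊆ A ∪ B → ∀ x ∈ Sk (A ∪ B) ∩ C, x ∈ Sk C := by
    intro C hC x hx
    rw [Finset.mem_inter, hSk] at hx
    rw [hSk, Finset.mem_filter]
    obtain ⟨hx1, hx2⟩ := hx
    rw [Finset.mem_filter] at hx1
    refine ⟨hx2, lt_of_le_of_lt ?_ hx1.2⟩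
    exact Finset.card_le_card (Finset.filter_subset_filter _ hC)
  have h1 := key A (Finset.subset_union_left)
  have h2 := key B (Finset.subset_union_right)
  refine ⟨h1, h2, ?_⟩
  apply Finset.Subset.antisymm
  · intro x hx
    simp only [Finset.mem_inter] at hx ⊢
    have sA : Sk A ⊆ A := by rw [hSk]; exact Finset.filter_subset _ _
    have sB : Sk B ⊆ B := by rw [hSk]; exact Finset.filter_subset _ _
    exact ⟨⟨hx.1.1, sA hx.1.2⟩, sB hx.2⟩
  · intro x hx
    simp only [Finset.mem_inter] at hx ⊢
    exact ⟨⟨hx.1.1, h1 x (Finset.mem_inter.mpr ⟨hx.1.1, hx.1.2⟩)⟩,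
      h2 x (Finset.mem_inter.mpr ⟨hx.1.1, hx.2⟩)⟩
end

section
/- Let G be a simple graph and S a vertex set of size s ≥ 3 that is an α-quasi-clique (|E(S)| ≥ α·C(s,2)) before an edge deletion, where the deleted edge (u,v) lies inside S. If at least one of the following holds — (1) min_{a∈S} d_S(a) ≥ α(s−1); (2) min_{a∈S} d_S(a) ≤ (Σ_{a∈S} d_S(a))/s − 1; (3) d_S(u) or d_S(v) equals min_{a∈S} d_S(a) — then there exists a single vertex w ∈ S such that S \ {w} is an α-quasi-clique after the edge deletion, i.e., the induced subgraph on S \ {w} (with edge (u,v) removed) has at least α·C(s−1,2) edges. -/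
/-- Lemma 4.2: let `S` be an `α`-quasi-clique of size `s ≥ 3` (so the ordered-pair
edge count `2|E(S)|` is at least `α·s(s-1)`), and let `(u,v)` be an edge inside `S`
that gets deleted. If (1) the minimum internal degree is at least `α(s-1)`, or
(2) the minimum internal degree is at most the average internal degree minus 1, or
(3) `u` or `v` attains the minimum internal degree, then there is a single vertex
`w ∈ S` whose removal leaves an `α`-quasi-clique: after deleting edge `(u,v)`, the
induced subgraph on `S \ {w}` has at least `α·C(s-1,2)` edges (stated via the
ordered-pair count being at least `α(s-1)(s-2)`). -/
theorem stmt15 {V : Type*} [Fintype V] [DecidableEq V] (G : SimpleGraph V)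
    [DecidableRel G.Adj]
    (S : Finset V) (s : ℕ) (hs : S.card = s) (hs3 : 3 ≤ s)
    (α : ℝ) (hα0 : 0 < α) (hα1 : α ≤ 1)
    (u v : V) (hu : u ∈ S) (hv : v ∈ S) (huv : G.Adj u v)
    (d : V → ℕ) (hd : ∀ a, d a = (S.filter fun b => G.Adj a b).card)
    (hdens : α * ((s : ℝ) * ((s : ℝ) - 1)) ≤
      (((S ×ˢ S).filter fun p => G.Adj p.1 p.2).card : ℝ))
    (hcond :
      (∀ a ∈ S, α * ((s : ℝ) - 1) ≤ (d a : ℝ)) ∨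
      (∃ a ∈ S, (∀ b ∈ S, d a ≤ d b) ∧ (d a : ℝ) ≤ (∑ b ∈ S, (d b : ℝ)) / (s : ℝ) - 1) ∨
      ((∀ b ∈ S, d u ≤ d b) ∨ (∀ b ∈ S, d v ≤ d b))) :
    ∃ w ∈ S,
      α * (((s : ℝ) - 1) * ((s : ℝ) - 2)) ≤
        (((((S.erase w) ×ˢ (S.erase w)).filter fun p =>
            G.Adj p.1 p.2 ∧ ¬(p = (u, v) ∨ p = (v, u))).card : ℝ)) := by
  classical
  set A : Finset (V × V) := (S ×ˢ S).filter fun p => G.Adj p.1 p.2 with hA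
  set B : V → Finset (V × V) := fun w =>
    ((S.erase w) ×ˢ (S.erase w)).filter fun p =>
      G.Adj p.1 p.2 ∧ ¬(p = (u, v) ∨ p = (v, u)) with hB
  -- fiber counts
  have hfst : ∀ w ∈ S, (A.filter fun p => p.1 = w).card = d w := by
    intro w hw
    rw [hd]
    have : (A.filter fun p => p.1 = w) = {w} ×ˢ (S.filter fun b => G.Adj w b) := by
      ext ⟨a, b⟩
      simp only [hA, Finset.filter_filter, Finset.mem_filter, Finset.mem_product,
        Finset.mem_singleton]
      constructor
      · rintro ⟨⟨haS, hbS⟩, hab, rfl⟩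
        exact ⟨rfl, hbS, hab⟩
      · rintro ⟨rfl, hbS, hab⟩
        exact ⟨⟨hw, hbS⟩, hab, rfl⟩
    rw [this, Finset.singleton_product, Finset.card_map]
  have hsnd : ∀ w ∈ S, (A.filter fun p => p.2 = w).card = d w := by
    intro w hw
    rw [hd]
    have : (A.filter fun p => p.2 = w) = (S.filter fun b => G.Adj w b) ×ˢ {w} := by
      ext ⟨a, b⟩
      simp only [hA, Finset.filter_filter, Finset.mem_filter, Finset.mem_product,
        Finset.mem_singleton]
      constructor
      · rintro ⟨⟨haS, hbS⟩, hab, rfl⟩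
        exact ⟨⟨haS, hab.symm⟩, rfl⟩
      · rintro ⟨⟨haS, hab⟩, rfl⟩
        exact ⟨⟨haS, hw⟩, hab.symm, rfl⟩
    rw [this, Finset.product_singleton, Finset.card_map]
  have hsum : A.card = ∑ b ∈ S, d b := by
    rw [Finset.card_eq_sum_card_fiberwise (f := Prod.fst) (t := S)
      (fun p hp => (Finset.mem_product.mp (Finset.mem_filter.mp hp).1).1)]
    exact Finset.sum_congr rfl hfst
  have hor : ∀ w ∈ S, (A.filter fun p => p.1 = w ∨ p.2 = w).card ≤ 2 * d w := by
    intro w hw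
    calc (A.filter fun p => p.1 = w ∨ p.2 = w).card
        ≤ (A.filter fun p => p.1 = w).card + (A.filter fun p => p.2 = w).card := by
          rw [Finset.filter_or]; exact Finset.card_union_le _ _
      _ = 2 * d w := by rw [hfst w hw, hsnd w hw]; ring
  -- general removal bound
  have hgen : ∀ w ∈ S, A.card ≤ (B w).card + (2 * d w + 2) := by
    intro w hw
    set D : Finset (V × V) :=
      (A.filter fun p => p.1 = w ∨ p.2 = w) ∪ {(u, v), (v, u)} with hD
    have hsub : A \ D ⊆ B w := by
      intro p hp
      obtain ⟨hpA, hpD⟩ := Finset.mem_sdiff.mp hp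
      rw [hD, Finset.mem_union, not_or] at hpD
      obtain ⟨hpf, hppair⟩ := hpD
      have h1 := Finset.mem_filter.mp hpA
      have hne : ¬(p.1 = w ∨ p.2 = w) := fun h => hpf (Finset.mem_filter.mpr ⟨hpA, h⟩)
      push_neg at hne
      have hpair : ¬(p = (u, v) ∨ p = (v, u)) := by
        simpa [Finset.mem_insert, Finset.mem_singleton] using hppair
      refine Finset.mem_filter.mpr ⟨Finset.mem_product.mpr ⟨?_, ?_⟩, h1.2, hpair⟩
      · exact Finset.mem_erase.mpr ⟨hne.1, (Finset.mem_product.mp h1.1).1⟩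
      · exact Finset.mem_erase.mpr ⟨hne.2, (Finset.mem_product.mp h1.1).2⟩
    have hDcard : D.card ≤ 2 * d w + 2 := by
      calc D.card ≤ (A.filter fun p => p.1 = w ∨ p.2 = w).card
            + ({(u, v), (v, u)} : Finset (V × V)).card := Finset.card_union_le _ _
        _ ≤ 2 * d w + 2 := by
            have h2 : ({(u, v), (v, u)} : Finset (V × V)).card ≤ 2 := by
              apply le_trans (Finset.card_insert_le _ _)
              simp
            exact add_le_add (hor w hw) h2
    calc A.card ≤ (A \ D).card + D.card := Finset.card_le_card_sdiff_add_card
      _ ≤ (B w).card + (2 * d w + 2) := add_le_add (Finset.card_le_card hsub) hDcard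
  -- removal bound for endpoints of the deleted edge
  have hends : ∀ w, (w = u ∨ w = v) → w ∈ S → A.card ≤ (B w).card + 2 * d w := by
    intro w hwend hw
    set D : Finset (V × V) := A.filter fun p => p.1 = w ∨ p.2 = w with hD
    have hsub : A \ D ⊆ B w := by
      intro p hp
      obtain ⟨hpA, hpD⟩ := Finset.mem_sdiff.mp hp
      have h1 := Finset.mem_filter.mp hpA
      have hne : ¬(p.1 = w ∨ p.2 = w) := fun h => hpD (Finset.mem_filter.mpr ⟨hpA, h⟩)
      push_neg at hne
      have hpair : ¬(p = (u, v) ∨ p = (v, u)) := by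
        rintro (rfl | rfl) <;> rcases hwend with rfl | rfl <;> simp_all
      refine Finset.mem_filter.mpr ⟨Finset.mem_product.mpr ⟨?_, ?_⟩, h1.2, hpair⟩
      · exact Finset.mem_erase.mpr ⟨hne.1, (Finset.mem_product.mp h1.1).1⟩
      · exact Finset.mem_erase.mpr ⟨hne.2, (Finset.mem_product.mp h1.1).2⟩
    calc A.card ≤ (A \ D).card + D.card := Finset.card_le_card_sdiff_add_card
      _ ≤ (B w).card + 2 * d w := add_le_add (Finset.card_le_card hsub) (hor w hw)
  have hsR : (3 : ℝ) ≤ (s : ℝ) := by exact_mod_cast hs3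
  have hsumR : ((A.card : ℝ)) = ∑ b ∈ S, (d b : ℝ) := by
    rw [hsum]; push_cast; ring
  rcases hcond with hmin | ⟨a0, ha0S, ha0min, ha0avg⟩ | hend
  · -- Case 1: min degree ≥ α(s-1); remove lower-degree endpoint of (u,v)
    have hne : u ≠ v := huv.ne
    have hvS' : v ∈ S.erase u := Finset.mem_erase.mpr ⟨hne.symm, hv⟩
    have hcard2 : ((S.erase u).erase v).card = s - 2 := by
      rw [Finset.card_erase_of_mem hvS', Finset.card_erase_of_mem hu, hs]
      omega
    have hsplit : (d u : ℝ) + (d v : ℝ) + ∑ b ∈ (S.erase u).erase v, (d b : ℝ)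
        = (A.card : ℝ) := by
      rw [hsumR, ← Finset.add_sum_erase S _ hu, ← Finset.add_sum_erase (S.erase u) _ hvS']
      ring
    have hrest : ((s : ℝ) - 2) * (α * ((s : ℝ) - 1))
        ≤ ∑ b ∈ (S.erase u).erase v, (d b : ℝ) := by
      have := Finset.card_nsmul_le_sum ((S.erase u).erase v) (fun b => (d b : ℝ))
        (α * ((s : ℝ) - 1)) (fun x hx =>
          hmin x (Finset.mem_of_mem_erase (Finset.mem_of_mem_erase hx)))
      rw [hcard2, nsmul_eq_mul] at this
      have hc : ((s - 2 : ℕ) : ℝ) = (s : ℝ) - 2 := by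
        have : 2 ≤ s := by omega
        push_cast [Nat.cast_sub this]; ring
      rwa [hc] at this
    rcases le_total (d u) (d v) with hle | hle
    · refine ⟨u, hu, ?_⟩
      have h1 : (A.card : ℝ) ≤ ((B u).card : ℝ) + 2 * (d u : ℝ) := by
        exact_mod_cast hends u (Or.inl rfl) hu
      have h2 : (d u : ℝ) ≤ (d v : ℝ) := by exact_mod_cast hle
      show α * (((s : ℝ) - 1) * ((s : ℝ) - 2)) ≤ ((B u).card : ℝ)
      nlinarith [hsplit, hrest]
    · refine ⟨v, hv, ?_⟩
      have h1 : (A.card : ℝ) ≤ ((B v).card : ℝ) + 2 * (d v : ℝ) := by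
        exact_mod_cast hends v (Or.inr rfl) hv
      have h2 : (d v : ℝ) ≤ (d u : ℝ) := by exact_mod_cast hle
      show α * (((s : ℝ) - 1) * ((s : ℝ) - 2)) ≤ ((B v).card : ℝ)
      nlinarith [hsplit, hrest]
  · -- Case 2: min degree ≤ average - 1; remove the min-degree vertex
    refine ⟨a0, ha0S, ?_⟩
    have h1 : (A.card : ℝ) ≤ ((B a0).card : ℝ) + (2 * (d a0 : ℝ) + 2) := by
      exact_mod_cast hgen a0 ha0S
    have havg : (d a0 : ℝ) ≤ (A.card : ℝ) / (s : ℝ) - 1 := by rwa [hsumR]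
    have hspos : (0 : ℝ) < (s : ℝ) := by linarith
    have h2 : (s : ℝ) * (d a0 : ℝ) ≤ (A.card : ℝ) - (s : ℝ) := by
      have := mul_le_mul_of_nonneg_left havg (le_of_lt hspos)
      rw [mul_sub, mul_div_cancel₀ _ (ne_of_gt hspos)] at this
      linarith
    show α * (((s : ℝ) - 1) * ((s : ℝ) - 2)) ≤ ((B a0).card : ℝ)
    nlinarith [hdens, h1, h2]
  · -- Case 3: u or v attains the minimum degree; remove it
    have key : ∀ w, (w = u ∨ w = v) → w ∈ S → (∀ b ∈ S, d w ≤ d b) →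
        α * (((s : ℝ) - 1) * ((s : ℝ) - 2)) ≤ ((B w).card : ℝ) := by
      intro w hwend hw hwmin
      have hsd : s * d w ≤ A.card := by
        rw [hsum, ← hs]
        calc S.card * d w = ∑ _b ∈ S, d w := by rw [Finset.sum_const, smul_eq_mul]
          _ ≤ ∑ b ∈ S, d b := Finset.sum_le_sum hwmin
      have hsdR : (s : ℝ) * (d w : ℝ) ≤ (A.card : ℝ) := by exact_mod_cast hsd
      have h1 : (A.card : ℝ) ≤ ((B w).card : ℝ) + 2 * (d w : ℝ) := by
        exact_mod_cast hends w hwend hw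
      nlinarith [hdens, h1, hsdR, hα0.le]
    rcases hend with hmu | hmv
    · exact ⟨u, hu, key u (Or.inl rfl) hu hmu⟩
    · exact ⟨v, hv, key v (Or.inr rfl) hv hmv⟩
end
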